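/- arXiv:1307.1447 — 8 statements merged into one kernel-verified Lean document; each statement's English description precedes it below -/
import Mathlib

section
/- Let A be a sequence of n real numbers, x a real number, and p ∈ {0,...,n}. Let ins(A,p,x) be the sequence obtained by inserting x between A[p-1] and A[p]. If x ≥ 0, then maxsum(ins(A,p,x)) ≥ maxsum(A); if x ≤ 0, then maxsum(ins(A,p,x)) ≤ maxsum(A). -/
noncomputable section

/-- Sum of the contiguous subsequence A[j..i]. -/
def seg (A : ℕ → ℝ) (j i : ℕ) : ℝ := ∑ t ∈ Finset.Icc j i, A t

/-- Maximal sum at element i: max over j ≤ i of sum A[j..i]. -/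
def MS (A : ℕ → ℝ) (i : ℕ) : ℝ :=
  (Finset.range (i+1)).sup' (Finset.nonempty_range_iff.mpr (Nat.succ_ne_zero i))
    (fun j => seg A j i)

/-- Maximal sum of a contiguous, possibly empty, subsequence of A[0..n-1]. -/
def maxsum (A : ℕ → ℝ) (n : ℕ) : ℝ :=
  Finset.fold max 0 (fun q => seg A q.1 q.2)
    (Finset.filter (fun q => q.1 ≤ q.2) ((Finset.range n) ×ˢ (Finset.range n)))

/-- Insertion of x between A[p-1] and A[p]. -/
def ins (A : ℕ → ℝ) (p : ℕ) (x : ℝ) : ℕ → ℝ :=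
  fun i => if i < p then A i else if i = p then x else A (i - 1)

/-- Sum of the circular subsequence A⟨j..i⟩ of a sequence of length n. -/
def circseg (A : ℕ → ℝ) (n j i : ℕ) : ℝ :=
  if j ≤ i then seg A j i else seg A j (n-1) + seg A 0 i

/-- Maximal circular sum at element i. -/
def MCS (A : ℕ → ℝ) (n i : ℕ) : ℝ :=
  if h : 0 < n then
    (Finset.range n).sup' (Finset.nonempty_range_iff.mpr h.ne')
      (fun j => circseg A n j i)
  else 0

/-- Maximal circular sum of a possibly empty circular subsequence. -/
def mcs (A : ℕ → ℝ) (n : ℕ) : ℝ :=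
  Finset.fold max 0 (fun q => circseg A n q.1 q.2)
    ((Finset.range n) ×ˢ (Finset.range n))

/-- OMCS A n i = i ⊖ j*, where j* is the largest j with sum A⟨(i⊖j)..i⟩ = MCS A n i. -/
def OMCS (A : ℕ → ℝ) (n i : ℕ) : ℕ :=
  (i + n - ((Finset.filter
      (fun j => circseg A n ((i + n - j) % n) i = MCS A n i)
      (Finset.range n)).max.getD 0)) % n

/-- h belongs to the circular range from a to b (indices mod n). -/
def inCircRange (n a b h : ℕ) : Prop :=
  (a ≤ b ∧ a ≤ h ∧ h ≤ b) ∨ (b < a ∧ ((a ≤ h ∧ h < n) ∨ h ≤ b))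

/-- The (noncircular) interval partition of A into L intervals A[α i .. β i]. -/
def IntervalPartition (A : ℕ → ℝ) (n L : ℕ) (α β : ℕ → ℕ) : Prop :=
  0 < L ∧ 0 < n ∧ α 0 = 0 ∧ β (L-1) = n-1 ∧
  (∀ i, i + 1 < L → α (i+1) = β i + 1) ∧
  (∀ i, i < L → α i ≤ β i) ∧
  (∀ i, i < L → ∀ j, α i ≤ j → j ≤ β i →
     (j ≠ β i → 0 ≤ MS A j) ∧ (j = β i → i < L - 1 → MS A j < 0))

lemma seg_Ico (A : ℕ → ℝ) (j i : ℕ) : seg A j i = ∑ t ∈ Finset.Ico j (i+1), A t := by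
  rw [seg, Finset.Ico_add_one_right_eq_Icc]

lemma maxsum_nonneg (A : ℕ → ℝ) (n : ℕ) : 0 ≤ maxsum A n :=
  (Finset.le_fold_max _).mpr (Or.inl le_rfl)

lemma seg_le_maxsum {A : ℕ → ℝ} {n j i : ℕ} (hj : j ≤ i) (hi : i < n) :
    seg A j i ≤ maxsum A n := by
  apply (Finset.le_fold_max _).mpr
  exact Or.inr ⟨(j, i), by simp [Finset.mem_filter, hj, hi, lt_of_le_of_lt hj hi], le_rfl⟩

lemma maxsum_le {A : ℕ → ℝ} {n : ℕ} {c : ℝ} (h0 : 0 ≤ c)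
    (h : ∀ j i, j ≤ i → i < n → seg A j i ≤ c) : maxsum A n ≤ c := by
  apply (Finset.fold_max_le _).mpr
  refine ⟨h0, fun q hq => ?_⟩
  simp only [Finset.mem_filter, Finset.mem_product, Finset.mem_range] at hq
  exact h q.1 q.2 hq.2 hq.1.2

lemma seg_ins_lt (A : ℕ → ℝ) (p : ℕ) (x : ℝ) {j i : ℕ} (hi : i < p) :
    seg (ins A p x) j i = seg A j i := by
  apply Finset.sum_congr rfl
  intro t ht
  simp only [Finset.mem_Icc] at ht
  simp [ins, lt_of_le_of_lt ht.2 hi]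

lemma seg_ins_shift (A : ℕ → ℝ) (p : ℕ) (x : ℝ) {j i : ℕ} (hp : p ≤ j) :
    seg (ins A p x) (j+1) (i+1) = seg A j i := by
  rw [seg_Ico, seg_Ico]
  have h1 : ∀ t ∈ Finset.Ico (j+1) (i+1+1), ins A p x t = A (t-1) := by
    intro t ht
    simp only [Finset.mem_Ico] at ht
    have : ¬ t < p := by omega
    have : t ≠ p := by omega
    simp [ins, *]
  rw [Finset.sum_congr rfl h1, Finset.sum_Ico_eq_sum_range, Finset.sum_Ico_eq_sum_range]
  have : i + 1 + 1 - (j+1) = i + 1 - j := by omega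
  rw [this]
  apply Finset.sum_congr rfl
  intro k hk
  congr 1
  omega

lemma seg_ins_mid (A : ℕ → ℝ) (p : ℕ) (x : ℝ) {j i : ℕ} (hj : j ≤ p) (hi : p ≤ i) :
    seg (ins A p x) j i = (∑ t ∈ Finset.Ico j i, A t) + x := by
  rw [seg_Ico]
  rw [← Finset.sum_Ico_consecutive _ (by omega : j ≤ p) (by omega : p ≤ i + 1)]
  rw [← Finset.sum_Ico_consecutive _ (by omega : p ≤ p + 1) (by omega : p + 1 ≤ i + 1)]
  have h1 : ∀ t ∈ Finset.Ico j p, ins A p x t = A t := by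
    intro t ht; simp only [Finset.mem_Ico] at ht; simp [ins, ht.2]
  have h2 : (∑ t ∈ Finset.Ico p (p+1), ins A p x t) = x := by
    simp [ins]
  have h3 : (∑ t ∈ Finset.Ico (p+1) (i+1), ins A p x t) = ∑ t ∈ Finset.Ico p i, A t := by
    have h1 : ∀ t ∈ Finset.Ico (p+1) (i+1), ins A p x t = A (t-1) := by
      intro t ht
      simp only [Finset.mem_Ico] at ht
      have : ¬ t < p := by omega
      have : t ≠ p := by omega
      simp [ins, *]
    rw [Finset.sum_congr rfl h1, Finset.sum_Ico_eq_sum_range, Finset.sum_Ico_eq_sum_range]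
    have : i + 1 - (p+1) = i - p := by omega
    rw [this]
    apply Finset.sum_congr rfl
    intro k hk
    congr 1
    omega
  rw [Finset.sum_congr rfl h1, h2, h3,
    ← Finset.sum_Ico_consecutive _ (by omega : j ≤ p) (by omega : p ≤ i)]
  ring

theorem stmt2 (A : ℕ → ℝ) (n p : ℕ) (hp : p ≤ n) (x : ℝ) :
    (0 ≤ x → maxsum A n ≤ maxsum (ins A p x) (n+1)) ∧
    (x ≤ 0 → maxsum (ins A p x) (n+1) ≤ maxsum A n) := by
  constructor
  · intro hx
    apply maxsum_le (maxsum_nonneg _ _)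
    intro j i hj hi
    rcases lt_or_ge i p with h | h
    · rw [← seg_ins_lt A p x h]
      exact seg_le_maxsum hj (by omega)
    · rcases le_or_gt p j with h2 | h2
      · rw [← seg_ins_shift A p x h2]
        exact seg_le_maxsum (by omega) (by omega)
      · have : seg A j i ≤ seg (ins A p x) j (i+1) := by
          rw [seg_ins_mid A p x (by omega) (by omega), ← seg_Ico]
          linarith
        exact this.trans (seg_le_maxsum (by omega) (by omega))
  · intro hx
    apply maxsum_le (maxsum_nonneg _ _)
    intro j i hj hi
    rcases lt_or_ge i p with h | h
    · rw [seg_ins_lt A p x h]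
      exact seg_le_maxsum hj (by omega)
    · rcases lt_or_ge p j with h2 | h2
      · obtain ⟨j', rfl⟩ : ∃ j', j = j' + 1 := ⟨j - 1, by omega⟩
        obtain ⟨i', rfl⟩ : ∃ i', i = i' + 1 := ⟨i - 1, by omega⟩
        rw [seg_ins_shift A p x (by omega)]
        exact seg_le_maxsum (by omega) (by omega)
      · rw [seg_ins_mid A p x h2 h]
        rcases eq_or_lt_of_le hj with rfl | hji
        · simp only [Finset.Ico_self, Finset.sum_empty, zero_add]
          exact hx.trans (maxsum_nonneg _ _)
        · have hi1 : 1 ≤ i := by omega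
          have : (∑ t ∈ Finset.Ico j i, A t) = seg A j (i-1) := by
            rw [seg_Ico, Nat.sub_add_cancel hi1]
          rw [this]
          have := seg_le_maxsum (A := A) (n := n) (j := j) (i := i-1) (by omega) (by omega)
          linarith
end
end

section
/- Let A be a sequence of n real numbers and define its interval partition: A = I_0 ++ I_1 ++ ... ++ I_{λ-1}, with interval I_i = A[α_i..β_i], determined by the conditions that for each interval and index j in [α_i, β_i], if j ≠ β_i then MS(A,j) ≥ 0, and if j = β_i and i < λ-1 then MS(A,j) < 0, where MS(A,j) = max over h ≤ j of sum of A[h..j]. Then for every interval I_i and every j ∈ [α_i, β_i], MS(A,j) = sum of A[α_i..j]; and if i ≠ λ-1, then the sum of A[j..β_i] is negative. -/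
noncomputable section

/-!
Kadane's recurrence `MS A (k+1) = max (MS A k) 0 + A (k+1)` says that the best segment ending
at `k+1` extends the best segment ending at `k` exactly when `MS A k ≥ 0`, and otherwise starts
afresh at `k+1`. In an interval partition `MS` is negative just before each `α i` and nonnegative
inside the interval, so the best segment ending at `j ∈ I_i` starts at `α i`. For the second
claim, `seg A j (β i) ≤ MS A (β i) < 0`.
-/

lemma seg_self (A : ℕ → ℝ) (j : ℕ) : seg A j j = A j := by
  simp [seg]

lemma seg_succ_right (A : ℕ → ℝ) {h k : ℕ} (hh : h ≤ k + 1) :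
    seg A h (k + 1) = seg A h k + A (k + 1) :=
  Finset.sum_Icc_succ_top hh A

lemma seg_succ_self (A : ℕ → ℝ) (k : ℕ) : seg A (k + 1) k = 0 := by
  simp [seg]

lemma seg_le_MS (A : ℕ → ℝ) {h i : ℕ} (hh : h ≤ i) : seg A h i ≤ MS A i :=
  Finset.le_sup' (fun j => seg A j i) (Finset.mem_range.mpr (Nat.lt_succ_of_le hh))

lemma exists_seg_eq_MS (A : ℕ → ℝ) (i : ℕ) : ∃ h ≤ i, seg A h i = MS A i := by
  obtain ⟨h, hh, heq⟩ := Finset.exists_mem_eq_sup'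
    (Finset.nonempty_range_iff.mpr (Nat.succ_ne_zero i)) (fun j => seg A j i)
  exact ⟨h, Nat.lt_succ_iff.mp (Finset.mem_range.mp hh), heq.symm⟩

lemma MS_zero (A : ℕ → ℝ) : MS A 0 = A 0 := by
  simp [MS, seg_self]

lemma MS_succ (A : ℕ → ℝ) (k : ℕ) : MS A (k + 1) = max (MS A k) 0 + A (k + 1) := by
  apply le_antisymm
  · refine Finset.sup'_le _ _ fun h hh => ?_
    have hh : h ≤ k + 1 := Nat.lt_succ_iff.mp (Finset.mem_range.mp hh)
    rw [seg_succ_right A hh]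
    gcongr
    rcases Nat.lt_or_ge h (k + 1) with hlt | hge
    · exact (seg_le_MS A (Nat.lt_succ_iff.mp hlt)).trans (le_max_left _ _)
    · rw [le_antisymm hh hge, seg_succ_self]
      exact le_max_right _ _
  · rcases le_total (MS A k) 0 with hle | hge
    · rw [max_eq_right hle, zero_add, ← seg_self A (k + 1)]
      exact seg_le_MS A le_rfl
    · obtain ⟨h, hh, heq⟩ := exists_seg_eq_MS A k
      rw [max_eq_left hge, ← heq, ← seg_succ_right A (by omega)]
      exact seg_le_MS A (by omega)

lemma MS_succ_of_neg (A : ℕ → ℝ) {k : ℕ} (hk : MS A k < 0) : MS A (k + 1) = A (k + 1) := by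
  rw [MS_succ, max_eq_right hk.le, zero_add]

lemma MS_succ_of_nonneg (A : ℕ → ℝ) {k : ℕ} (hk : 0 ≤ MS A k) :
    MS A (k + 1) = MS A k + A (k + 1) := by
  rw [MS_succ, max_eq_left hk]

lemma MS_eq_seg_of_nonneg (A : ℕ → ℝ) {a j : ℕ} (hstart : MS A a = A a)
    (hrun : ∀ t, a ≤ t → t < j → 0 ≤ MS A t) (haj : a ≤ j) : MS A j = seg A a j := by
  induction j, haj using Nat.le_induction with
  | base => rw [hstart, seg_self]
  | succ k hak ih =>
    rw [MS_succ_of_nonneg A (hrun k hak k.lt_succ_self), ih fun t hat htk => hrun t hat (by omega),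
      seg_succ_right A (by omega)]

namespace IntervalPartition

variable {A : ℕ → ℝ} {n L : ℕ} {α β : ℕ → ℕ}

lemma MS_right_lt_zero (hip : IntervalPartition A n L α β) {i : ℕ} (hi : i < L - 1) :
    MS A (β i) < 0 := by
  obtain ⟨-, -, -, -, -, hαβ, hMS⟩ := hip
  exact (hMS i (by omega) (β i) (hαβ i (by omega)) le_rfl).2 rfl hi

lemma MS_left (hip : IntervalPartition A n L α β) {i : ℕ} (hi : i < L) :
    MS A (α i) = A (α i) := by
  cases i with
  | zero => rw [hip.2.2.1, MS_zero]
  | succ i =>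
    rw [hip.2.2.2.2.1 i hi]
    exact MS_succ_of_neg A (hip.MS_right_lt_zero (by omega))

lemma MS_nonneg (hip : IntervalPartition A n L α β) {i j : ℕ} (hi : i < L) (hαj : α i ≤ j)
    (hjβ : j < β i) : 0 ≤ MS A j := by
  obtain ⟨-, -, -, -, -, -, hMS⟩ := hip
  exact (hMS i hi j hαj hjβ.le).1 hjβ.ne

end IntervalPartition

theorem stmt5 (A : ℕ → ℝ) (n L : ℕ) (α β : ℕ → ℕ)
    (hip : IntervalPartition A n L α β) :
    ∀ i, i < L → ∀ j, α i ≤ j → j ≤ β i →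
      MS A j = seg A (α i) j ∧ (i ≠ L - 1 → seg A j (β i) < 0) := by
  intro i hi j hαj hjβ
  refine ⟨?_, fun hne => ?_⟩
  · exact MS_eq_seg_of_nonneg A (hip.MS_left hi)
      (fun t hαt htj => hip.MS_nonneg hi hαt (by omega)) hαj
  · exact (seg_le_MS A hjβ).trans_lt (hip.MS_right_lt_zero (by omega))
end
end

section
/- Let A be a sequence of n real numbers with interval partition I_0,...,I_{λ-1}, and suppose x < 0 is inserted at position p lying in interval I_k, giving B = ins(A,p,x). Then for every i with β_k < i < n, MS(B,i+1) = MS(A,i). -/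
noncomputable section

theorem le_MS (A : ℕ → ℝ) (i j : ℕ) (hj : j ≤ i) : seg A j i ≤ MS A i := by
  unfold MS
  exact Finset.le_sup' (fun j => seg A j i) (Finset.mem_range.mpr (Nat.lt_succ_of_le hj))

theorem stmt8 (A : ℕ → ℝ) (n L : ℕ) (α β : ℕ → ℕ)
    (hip : IntervalPartition A n L α β)
    (x : ℝ) (hx : x < 0) (p k : ℕ) (hp : p < n) (hk : k < L)
    (hpk : α k ≤ p ∧ p ≤ β k) :
    ∀ i, β k < i → i < n → MS (ins A p x) (i+1) = MS A i := by

  intro i hbi hin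
  obtain ⟨hL, hn, hα0, hβL, hαsucc, hαleβ, hMSprop⟩ := hip
  have hpβ := hpk.2
  have hpi : p < i := lt_of_le_of_lt hpβ hbi
  set B := ins A p x with hB
  -- shift lemma
  have hshift : ∀ j, p < j → seg B j (i+1) = seg A (j-1) i := by
    intro j hj
    unfold seg
    rw [show Finset.Icc j (i+1) = Finset.map (addRightEmbedding 1) (Finset.Icc (j-1) i) by
      rw [Finset.map_add_right_Icc]; congr 1 <;> omega]
    rw [Finset.sum_map]
    apply Finset.sum_congr rfl
    intro t ht
    simp only [Finset.mem_Icc] at ht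
    show B (t + 1) = A t
    have h1 : ¬ (t + 1 < p) := by omega
    have h2 : ¬ (t + 1 = p) := by omega
    simp [hB, ins, h1, h2]
  -- low lemma
  have hlow : ∀ j, j ≤ p → seg B j (i+1) = seg A j i + x := by
    intro j hj
    have hsplit : Finset.Icc j (i+1) = Finset.Icc j p ∪ Finset.Icc (p+1) (i+1) := by
      ext t; simp only [Finset.mem_union, Finset.mem_Icc]; omega
    have hdisj : Disjoint (Finset.Icc j p) (Finset.Icc (p+1) (i+1)) := by
      rw [Finset.disjoint_left]; intro t ht ht'
      simp only [Finset.mem_Icc] at ht ht'; omega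
    have htop : Finset.Icc j p = insert p (Finset.Ico j p) := by
      ext t; simp only [Finset.mem_insert, Finset.mem_Icc, Finset.mem_Ico]; omega
    have hBp : B p = x := by
      simp [hB, ins]
    have hBlow : ∀ t ∈ Finset.Ico j p, B t = A t := by
      intro t ht
      simp only [Finset.mem_Ico] at ht
      simp [hB, ins, ht.2]
    have hA1 : seg A j i = (∑ t ∈ Finset.Ico j p, A t) + seg A p i := by
      unfold seg
      rw [show Finset.Icc j i = Finset.Ico j p ∪ Finset.Icc p i by
        ext t; simp only [Finset.mem_union, Finset.mem_Icc, Finset.mem_Ico]; omega]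
      rw [Finset.sum_union]
      rw [Finset.disjoint_left]; intro t ht ht'
      simp only [Finset.mem_Icc, Finset.mem_Ico] at ht ht'; omega
    have hA2 : seg B (p+1) (i+1) = seg A p i := by
      have := hshift (p+1) (by omega)
      simpa using this
    unfold seg
    rw [hsplit, Finset.sum_union hdisj, htop, Finset.sum_insert (by simp)]
    rw [hBp, Finset.sum_congr rfl hBlow]
    have h5 : ∑ t ∈ Finset.Icc (p+1) (i+1), B t = seg A p i := hA2
    have h6 : ∑ t ∈ Finset.Icc j i, A t = (∑ t ∈ Finset.Ico j p, A t) + seg A p i := hA1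
    rw [h5, h6]
    ring
  -- k < L - 1
  have hkL : k < L - 1 := by
    by_contra h
    have hkeq : k = L - 1 := by omega
    rw [hkeq, hβL] at hbi
    omega
  have hMSβ : MS A (β k) < 0 :=
    (hMSprop k hk (β k) (hαleβ k hk) le_rfl).2 rfl hkL
  apply le_antisymm
  · apply Finset.sup'_le
    intro j hj
    simp only [Finset.mem_range] at hj
    rcases le_or_gt j p with hjp | hjp
    · rw [hlow j hjp]
      have h1 : seg A j i ≤ MS A i := le_MS A i j (by omega)
      linarith
    · rw [hshift j hjp]
      exact le_MS A i (j-1) (by omega)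
  · apply Finset.sup'_le
    intro j hj
    simp only [Finset.mem_range] at hj
    rcases le_or_gt p j with hjp | hjp
    · have h1 : seg B (j+1) (i+1) = seg A j i := by
        have := hshift (j+1) (by omega); simpa using this
      rw [← h1]
      exact le_MS B (i+1) (j+1) (by omega)
    · -- j < p ≤ β k
      have hsplitA : seg A j i = seg A j (β k) + seg A (β k + 1) i := by
        unfold seg
        rw [show Finset.Icc j i = Finset.Icc j (β k) ∪ Finset.Icc (β k + 1) i by
          ext t; simp only [Finset.mem_union, Finset.mem_Icc]; omega]
        rw [Finset.sum_union]
        rw [Finset.disjoint_left]; intro t ht ht'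
        simp only [Finset.mem_Icc] at ht ht'; omega
      have h2 : seg A j (β k) ≤ MS A (β k) := le_MS A (β k) j (by omega)
      have h3 : seg B (β k + 2) (i+1) = seg A (β k + 1) i := by
        have := hshift (β k + 2) (by omega); simpa using this
      have h4 : seg B (β k + 2) (i+1) ≤ MS B (i+1) := le_MS B (i+1) (β k + 2) (by omega)
      rw [hsplitA]
      rw [h3] at h4
      linarith
end
end

section
/- Let A be a sequence of n ≥ 1 real numbers and define OMCS(A,i) as i ⊖ j* where j* is the largest j ∈ {0,...,n-1} such that sum(A⟨(i ⊖ j)..i⟩) = MCS(A,i) (⊖ being subtraction mod n). Then sum(A⟨OMCS(A,i)..i⟩) = MCS(A,i); moreover, if OMCS(A,i) ≠ i ⊕ 1 (addition mod n), then every nonempty suffix of the circular subsequence A⟨(i ⊕ 1)..(OMCS(A,i) ⊖ 1)⟩ has negative sum. -/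
noncomputable section

/-!
A circular segment `A⟨k..i⟩` has `i ⊖ k + 1` entries, and `OMCS A n i` is the start of the longest
one whose sum is `MCS A n i`. A start `k` in the range `(i ⊕ 1)..(OMCS A n i ⊖ 1)` gives a strictly
longer segment, so its sum is `< MCS A n i`. Cutting it as
`A⟨k..i⟩ = A⟨k..OMCS A n i ⊖ 1⟩ ++ A⟨OMCS A n i..i⟩`, whose second part sums to `MCS A n i`, makes
the first part negative.
-/

-- `omega` treats `x % n` as an atom; this pins it down for the differences `i + n - j` below.
lemma mod_cases_of_lt_two_mul {x n : ℕ} (hx : x < 2 * n) :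
    x % n < n ∧ (x % n = x ∨ x % n + n = x) := by
  refine ⟨Nat.mod_lt _ (by omega), ?_⟩
  rcases Nat.lt_or_ge x n with h | h
  · exact .inl (Nat.mod_eq_of_lt h)
  · right; rw [Nat.mod_eq_sub_mod h, Nat.mod_eq_of_lt (by omega)]; omega

lemma sub_mod_sub_mod {n i j : ℕ} (hi : i < n) (hj : j < n) :
    (i + n - (i + n - j) % n) % n = j := by
  have h₁ := mod_cases_of_lt_two_mul (x := i + n - j) (n := n) (by omega)
  have h₂ := mod_cases_of_lt_two_mul (x := i + n - (i + n - j) % n) (n := n) (by omega)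
  omega

def windowSum (A : ℕ → ℝ) (n j k : ℕ) : ℝ := ∑ t ∈ Finset.range k, A ((j + t) % n)

lemma windowSum_add (A : ℕ → ℝ) (n j k l : ℕ) :
    windowSum A n j (k + l) = windowSum A n j k + windowSum A n ((j + k) % n) l := by
  simp only [windowSum, Finset.sum_range_add, Nat.mod_add_mod, add_assoc]

lemma seg_eq_windowSum (A : ℕ → ℝ) {n j i : ℕ} (hji : j ≤ i) (hi : i < n) :
    seg A j i = windowSum A n j (i + 1 - j) := by
  rw [seg, windowSum, ← Finset.Ico_add_one_right_eq_Icc, Finset.sum_Ico_eq_sum_range]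
  refine Finset.sum_congr rfl fun t ht => ?_
  rw [Nat.mod_eq_of_lt (by simp only [Finset.mem_range] at ht; omega)]

lemma circseg_eq_windowSum (A : ℕ → ℝ) {n j i : ℕ} (hj : j < n) (hi : i < n) :
    circseg A n j i = windowSum A n j ((i + n - j) % n + 1) := by
  rw [circseg]
  split_ifs with hji
  · rw [seg_eq_windowSum A hji hi, show (i + n - j) % n = i - j by
      rw [show i + n - j = i - j + n by omega, Nat.add_mod_right, Nat.mod_eq_of_lt (by omega)]]
    congr 1; omega
  · rw [Nat.mod_eq_of_lt (by omega), show i + n - j + 1 = (n - j) + (i + 1) by omega,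
      windowSum_add, show (j + (n - j)) % n = 0 by simp [show j + (n - j) = n by omega],
      seg_eq_windowSum A (show j ≤ n - 1 by omega) (show n - 1 < n by omega),
      seg_eq_windowSum A (Nat.zero_le i) hi]
    congr 2; omega

-- `hpk` says that `p` is an index of `A⟨k..i⟩` other than `k`.
lemma circseg_split (A : ℕ → ℝ) {n k p i : ℕ} (hk : k < n) (hp : p < n) (hi : i < n)
    (hpk : (i + n - p) % n < (i + n - k) % n) :
    circseg A n k i = circseg A n k ((p + n - 1) % n) + circseg A n p i := by
  set a := (i + n - k) % n
  set c := (i + n - p) % n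
  have ha := mod_cases_of_lt_two_mul (x := i + n - k) (n := n) (by omega)
  have hc := mod_cases_of_lt_two_mul (x := i + n - p) (n := n) (by omega)
  have hq := mod_cases_of_lt_two_mul (x := p + n - 1) (n := n) (by omega)
  have hm := mod_cases_of_lt_two_mul (x := k + (a - c)) (n := n) (by omega)
  have hl := mod_cases_of_lt_two_mul (x := (p + n - 1) % n + n - k) (n := n) (by omega)
  calc circseg A n k i = windowSum A n k ((a - c) + (c + 1)) := by
        rw [circseg_eq_windowSum A hk hi]; congr 1; omega
    _ = windowSum A n k (a - c) + windowSum A n p (c + 1) := by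
        rw [windowSum_add, show (k + (a - c)) % n = p by omega]
    _ = _ := by
        rw [circseg_eq_windowSum A hk hq.1, circseg_eq_windowSum A hp hi]
        congr 2; omega

lemma circseg_le_MCS (A : ℕ → ℝ) {n j : ℕ} (hj : j < n) (i : ℕ) :
    circseg A n j i ≤ MCS A n i := by
  rw [MCS, dif_pos (by omega)]
  exact Finset.le_sup' (fun j => circseg A n j i) (Finset.mem_range.mpr hj)

lemma exists_circseg_eq_MCS (A : ℕ → ℝ) {n : ℕ} (hn : 0 < n) (i : ℕ) :
    ∃ j < n, circseg A n j i = MCS A n i := by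
  rw [MCS, dif_pos hn]
  obtain ⟨j, hj, heq⟩ := Finset.exists_mem_eq_sup' (Finset.nonempty_range_iff.mpr hn.ne')
    (fun j => circseg A n j i)
  exact ⟨j, Finset.mem_range.mp hj, heq.symm⟩

lemma exists_OMCS_eq (A : ℕ → ℝ) {n i : ℕ} (hi : i < n) :
    ∃ J < n, OMCS A n i = (i + n - J) % n ∧ circseg A n ((i + n - J) % n) i = MCS A n i ∧
      ∀ j < n, circseg A n ((i + n - j) % n) i = MCS A n i → j ≤ J := by
  set F := (Finset.range n).filter fun j => circseg A n ((i + n - j) % n) i = MCS A n i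
  have hF : F.Nonempty := by
    obtain ⟨j, hj, heq⟩ := exists_circseg_eq_MCS A (Nat.zero_lt_of_lt hi) i
    refine ⟨(i + n - j) % n, Finset.mem_filter.mpr ⟨Finset.mem_range.mpr (Nat.mod_lt _ ?_), ?_⟩⟩
    · omega
    · rwa [sub_mod_sub_mod hi hj]
  have hmax : F.max.getD 0 = F.max' hF := by rw [← Finset.coe_max' hF]; rfl
  obtain ⟨hJn, hJ⟩ := Finset.mem_filter.mp (F.max'_mem hF)
  exact ⟨F.max' hF, Finset.mem_range.mp hJn, by rw [OMCS, hmax], hJ,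
    fun j hj heq => F.le_max' j (Finset.mem_filter.mpr ⟨Finset.mem_range.mpr hj, heq⟩)⟩

lemma lt_sub_mod_of_inCircRange {n i J k : ℕ} (hi : i < n) (hJ : J + 1 < n)
    (hk : inCircRange n ((i + 1) % n) (((i + n - J) % n + n - 1) % n) k) :
    k < n ∧ J < (i + n - k) % n := by
  unfold inCircRange at hk
  have h₁ := mod_cases_of_lt_two_mul (x := i + 1) (n := n) (by omega)
  have h₂ := mod_cases_of_lt_two_mul (x := i + n - J) (n := n) (by omega)
  have h₃ := mod_cases_of_lt_two_mul (x := (i + n - J) % n + n - 1) (n := n) (by omega)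
  have h₄ := mod_cases_of_lt_two_mul (x := i + n - k) (n := n) (by omega)
  omega

theorem stmt12_general (A : ℕ → ℝ) (n : ℕ) (i : ℕ) (hi : i < n) :
    circseg A n (OMCS A n i) i = MCS A n i ∧
    (OMCS A n i ≠ (i + 1) % n →
      ∀ h, inCircRange n ((i + 1) % n) ((OMCS A n i + n - 1) % n) h →
        circseg A n h ((OMCS A n i + n - 1) % n) < 0) := by
  obtain ⟨J, hJn, hOMCS, hJ, hJmax⟩ := exists_OMCS_eq A hi
  rw [hOMCS]
  refine ⟨hJ, fun hne k hk => ?_⟩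
  have hJ1 : J + 1 < n := by
    by_contra hJ1
    have hJ' : i + n - J = i + 1 := by omega
    exact hne (by rw [hJ'])
  obtain ⟨hkn, hJk⟩ := lt_sub_mod_of_inCircRange hi hJ1 hk
  have hp : (i + n - J) % n < n := Nat.mod_lt _ (by omega)
  have hlt : circseg A n k i < MCS A n i := by
    refine (circseg_le_MCS A hkn i).lt_of_ne fun heq => ?_
    have hJk' := hJmax _ (Nat.mod_lt _ (by omega)) (by rwa [sub_mod_sub_mod hi hkn])
    omega
  have hsplit := circseg_split A hkn hp hi (by rwa [sub_mod_sub_mod hi hJn])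
  linarith

theorem stmt12 (A : ℕ → ℝ) (n : ℕ) (hn : 1 ≤ n) (i : ℕ) (hi : i < n) :
    circseg A n (OMCS A n i) i = MCS A n i ∧
    (OMCS A n i ≠ (i + 1) % n →
      ∀ h, inCircRange n ((i + 1) % n) ((OMCS A n i + n - 1) % n) h →
        circseg A n h ((OMCS A n i + n - 1) % n) < 0) :=
  stmt12_general A n i hi
end
end

section
/- Let A be a sequence of n ≥ 1 real numbers with both positive and negative elements, such that MCS(A,i) ≥ 0 for all i. Then for every index i and every index h in the circular range from i to OMCS(A,i) ⊖ 1, OMCS(A,h) = OMCS(A,i). -/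
noncomputable section

/-! ### Auxiliary machinery -/

namespace Stmt14Aux

/-- The set of backward distances j achieving the max. -/
def Jf (A : ℕ → ℝ) (n i : ℕ) : Finset ℕ :=
  Finset.filter (fun j => circseg A n ((i + n - j) % n) i = MCS A n i) (Finset.range n)

/-- The largest backward distance achieving the max. -/
def Jm (A : ℕ → ℝ) (n i : ℕ) : ℕ := (Jf A n i).max.getD 0

lemma OMCS_eq (A : ℕ → ℝ) (n i : ℕ) : OMCS A n i = (i + n - Jm A n i) % n := rfl

lemma hm1 {n a b : ℕ} (hb : b ≤ a) (ha : a < n) : (a + n - b) % n = a - b := by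
  have h : a + n - b = (a - b) + n := by omega
  rw [h, Nat.add_mod_right, Nat.mod_eq_of_lt (by omega)]

lemma hm2 {n a b : ℕ} (hab : a < b) (hbn : b ≤ n) : (a + n - b) % n = a + n - b :=
  Nat.mod_eq_of_lt (by omega)

lemma invol {n a i : ℕ} (ha : a < n) (hi : i < n) : (i + n - (i + n - a) % n) % n = a := by
  rcases le_or_gt a i with h | h
  · rw [hm1 h hi, hm1 (by omega) hi]; omega
  · rw [hm2 h (le_of_lt ha)]
    have h2 : i + n - (i + n - a) = a := by omega
    rw [h2, Nat.mod_eq_of_lt ha]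

lemma inj_back {n i a b : ℕ} (hi : i < n) (ha : a < n) (hb : b < n)
    (e : (i + n - a) % n = (i + n - b) % n) : a = b := by
  have h1 := invol ha hi
  rw [e, invol hb hi] at h1
  exact h1.symm

lemma circseg_le_MCS {A : ℕ → ℝ} {n a : ℕ} (hn : 0 < n) (ha : a < n) (i : ℕ) :
    circseg A n a i ≤ MCS A n i := by
  rw [MCS, dif_pos hn]
  exact Finset.le_sup' (fun j => circseg A n j i) (Finset.mem_range.mpr ha)

lemma MCS_exists {A : ℕ → ℝ} {n : ℕ} (hn : 0 < n) (i : ℕ) :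
    ∃ a, a < n ∧ MCS A n i = circseg A n a i := by
  rw [MCS, dif_pos hn]
  obtain ⟨a, ha, he⟩ := Finset.exists_mem_eq_sup' (Finset.nonempty_range_iff.mpr hn.ne')
    (fun j => circseg A n j i)
  exact ⟨a, Finset.mem_range.mp ha, he⟩

lemma Jf_nonempty {A : ℕ → ℝ} {n i : ℕ} (hn : 0 < n) (hi : i < n) :
    (Jf A n i).Nonempty := by
  obtain ⟨a, ha, he⟩ := MCS_exists (A := A) hn i
  refine ⟨(i + n - a) % n, Finset.mem_filter.mpr ⟨Finset.mem_range.mpr (Nat.mod_lt _ hn), ?_⟩⟩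
  rw [invol ha hi]
  exact he.symm

lemma Jm_spec {A : ℕ → ℝ} {n i : ℕ} (hn : 0 < n) (hi : i < n) :
    Jm A n i ∈ Jf A n i ∧ ∀ j ∈ Jf A n i, j ≤ Jm A n i := by
  have hne := Jf_nonempty (A := A) hn hi
  have hmax : (Jf A n i).max = some ((Jf A n i).max' hne) := (Finset.coe_max' hne).symm
  have hJm : Jm A n i = (Jf A n i).max' hne := by rw [Jm, hmax]; rfl
  rw [hJm]
  exact ⟨Finset.max'_mem _ _, fun j hj => Finset.le_max' _ j hj⟩

lemma Jm_lt {A : ℕ → ℝ} {n i : ℕ} (hn : 0 < n) (hi : i < n) : Jm A n i < n := by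
  have := (Jm_spec (A := A) hn hi).1
  rw [Jf, Finset.mem_filter, Finset.mem_range] at this
  exact this.1

lemma Jm_eq_MCS {A : ℕ → ℝ} {n i : ℕ} (hn : 0 < n) (hi : i < n) :
    circseg A n ((i + n - Jm A n i) % n) i = MCS A n i := by
  have := (Jm_spec (A := A) hn hi).1
  rw [Jf, Finset.mem_filter] at this
  exact this.2

lemma le_Jm {A : ℕ → ℝ} {n i j : ℕ} (hn : 0 < n) (hi : i < n) (hj : j < n)
    (he : circseg A n ((i + n - j) % n) i = MCS A n i) : j ≤ Jm A n i := by
  exact (Jm_spec (A := A) hn hi).2 j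
    (Finset.mem_filter.mpr ⟨Finset.mem_range.mpr hj, he⟩)

lemma circseg_succ {A : ℕ → ℝ} {n i a : ℕ} (hn : 0 < n) (hi : i < n) (ha : a < n) :
    circseg A n a ((i+1) % n) =
      if a = (i+1) % n then A ((i+1) % n) else circseg A n a i + A ((i+1) % n) := by
  rcases Nat.lt_or_ge (i+1) n with hlt | hge
  · rw [Nat.mod_eq_of_lt hlt]
    split_ifs with hc
    · subst hc
      simp [circseg, seg]
    · rcases Nat.lt_or_ge i a with h1 | h1
      · -- a > i, and a ≠ i+1 so a > i+1
        have h2 : i + 1 < a := by omega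
        rw [circseg, if_neg (by omega), circseg, if_neg (by omega)]
        have : seg A 0 (i+1) = seg A 0 i + A (i+1) := by
          rw [seg, seg, Finset.sum_Icc_succ_top (Nat.zero_le _)]
        rw [this]; ring
      · -- a ≤ i
        rw [circseg, if_pos (by omega), circseg, if_pos h1, seg, seg,
          Finset.sum_Icc_succ_top (by omega)]
  · -- i + 1 = n
    have hin : i + 1 = n := by omega
    have h0 : (i+1) % n = 0 := by rw [hin, Nat.mod_self]
    rw [h0]
    split_ifs with hc
    · subst hc
      simp [circseg, seg]
    · rw [circseg, if_neg (by omega), circseg, if_pos (by omega)]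
      have h1 : seg A 0 0 = A 0 := by simp [seg]
      have h2 : i = n - 1 := by omega
      rw [h1, h2]

lemma shift {n i j : ℕ} (hi : i < n) (hj : j + 1 < n) :
    ((i+1) % n + n - (j+1)) % n = (i + n - j) % n := by
  rcases Nat.lt_or_ge (i+1) n with hlt | hge
  · rw [Nat.mod_eq_of_lt hlt]
    congr 1
    omega
  · have hin : i + 1 = n := by omega
    have h0 : (i+1) % n = 0 := by rw [hin, Nat.mod_self]
    rw [h0]
    have e1 : (0 + n - (j+1)) % n = 0 + n - (j+1) := Nat.mod_eq_of_lt (by omega)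
    have e2 : (i + n - j) % n = n - 1 - j := by
      rw [hm1 (by omega) hi]
      omega
    rw [e1, e2]
    omega

lemma succ_as_back {n i : ℕ} (hn : 0 < n) : (i + n - (n-1)) % n = (i+1) % n := by
  congr 1
  omega

/-- The key step lemma. -/
lemma step {A : ℕ → ℝ} {n : ℕ} (htype3 : ∀ i, i < n → 0 ≤ MCS A n i)
    {i : ℕ} (hi : i < n) (hn2 : 2 ≤ n) (hJ : Jm A n i ≠ n - 1) :
    Jm A n ((i+1) % n) = Jm A n i + 1 := by
  have hn0 : 0 < n := by omega
  have hJlt : Jm A n i < n := Jm_lt hn0 hi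
  have hh' : (i+1) % n < n := Nat.mod_lt _ hn0
  have hM0 : 0 ≤ MCS A n i := htype3 i hi
  set o0 := (i + n - Jm A n i) % n with ho0
  have ho0lt : o0 < n := Nat.mod_lt _ hn0
  have ho0ne : o0 ≠ (i+1) % n := by
    intro hcon
    apply hJ
    apply inj_back hi hJlt (by omega)
    rw [← ho0, hcon, ← succ_as_back hn0]
  have hMCS' : MCS A n ((i+1) % n) = MCS A n i + A ((i+1) % n) := by
    apply le_antisymm
    · rw [MCS, dif_pos hn0]
      apply Finset.sup'_le
      intro a hA
      rw [Finset.mem_range] at hA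
      rw [circseg_succ hn0 hi hA]
      split_ifs with hc
      · linarith
      · have := circseg_le_MCS (A := A) hn0 hA i
        linarith
    · have h1 : circseg A n o0 ((i+1) % n) = circseg A n o0 i + A ((i+1) % n) := by
        rw [circseg_succ hn0 hi ho0lt, if_neg ho0ne]
      have h2 := circseg_le_MCS (A := A) hn0 ho0lt ((i+1) % n)
      rw [Jm_eq_MCS hn0 hi] at h1
      linarith
  -- upper bound
  have hub : ∀ j ∈ Jf A n ((i+1) % n), j ≤ Jm A n i + 1 := by
    intro j hj
    rw [Jf, Finset.mem_filter, Finset.mem_range] at hj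
    obtain ⟨hjn, hje⟩ := hj
    rcases Nat.eq_zero_or_pos j with h0 | h1
    · omega
    · obtain ⟨j', rfl⟩ : ∃ j', j = j' + 1 := ⟨j - 1, by omega⟩
      rw [shift hi hjn] at hje
      set s := (i + n - j') % n with hs
      have hslt : s < n := Nat.mod_lt _ hn0
      have hsne : s ≠ (i+1) % n := by
        intro hcon
        have : j' = n - 1 := by
          apply inj_back hi (by omega) (by omega)
          rw [← hs, hcon, ← succ_as_back hn0]
        omega
      rw [circseg_succ hn0 hi hslt, if_neg hsne, hMCS'] at hje
      have : circseg A n s i = MCS A n i := by linarith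
      have := le_Jm hn0 hi (by omega) this
      omega
  -- membership
  have hmem : Jm A n i + 1 ∈ Jf A n ((i+1) % n) := by
    rw [Jf, Finset.mem_filter, Finset.mem_range]
    refine ⟨by omega, ?_⟩
    rw [shift hi (by omega), ← ho0, circseg_succ hn0 hi ho0lt, if_neg ho0ne,
      Jm_eq_MCS hn0 hi, hMCS']
  have h1 := (Jm_spec (A := A) hn0 hh').2 _ hmem
  have h2 := hub _ (Jm_spec (A := A) hn0 hh').1
  omega

lemma D_eq {n i J0 : ℕ} (hn2 : 2 ≤ n) (hi : i < n) (hJ : J0 < n) :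
    (((i + n - J0) % n + n - 1) % n + n - i) % n = n - 1 - J0 := by
  rcases le_or_gt J0 i with c1 | c1
  · rw [hm1 c1 hi]
    rcases Nat.eq_zero_or_pos (i - J0) with c2 | c2
    · rw [c2]
      have e2 : (0 + n - 1) % n = 0 + n - 1 := Nat.mod_eq_of_lt (by omega)
      rw [e2, hm1 (a := 0 + n - 1) (b := i) (by omega) (by omega)]
      omega
    · rw [hm1 (a := i - J0) (b := 1) (by omega) (by omega)]
      rw [hm2 (a := i - J0 - 1) (b := i) (by omega) (by omega)]
      omega
  · rw [hm2 c1 (by omega)]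
    rw [hm1 (a := i + n - J0) (b := 1) (by omega) (by omega)]
    rw [hm1 (a := i + n - J0 - 1) (b := i) (by omega) (by omega)]
    omega

end Stmt14Aux

open Stmt14Aux

theorem stmt14 (A : ℕ → ℝ) (n : ℕ) (hn : 1 ≤ n)
    (hpos : ∃ i, i < n ∧ 0 < A i) (hneg : ∃ i, i < n ∧ A i < 0)
    (htype3 : ∀ i, i < n → 0 ≤ MCS A n i) :
    ∀ i, i < n → ∀ h, inCircRange n i ((OMCS A n i + n - 1) % n) h →
      OMCS A n h = OMCS A n i := by
  have hn2 : 2 ≤ n := by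
    by_contra hc
    obtain ⟨p, hp, hAp⟩ := hpos
    obtain ⟨q, hq, hAq⟩ := hneg
    have : p = 0 := by omega
    have : q = 0 := by omega
    subst_vars
    linarith
  have hn0 : 0 < n := by omega
  intro i hi h hmem
  set J0 := Jm A n i with hJ0
  have hJ0lt : J0 < n := Jm_lt hn0 hi
  -- key induction along the range
  have key : ∀ t, t + J0 ≤ n - 1 → Jm A n ((i + t) % n) = J0 + t := by
    intro t
    induction t with
    | zero =>
      intro _
      rw [Nat.add_zero, Nat.mod_eq_of_lt hi]
      exact hJ0.symm
    | succ t ih =>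
      intro ht
      have h1 := ih (by omega)
      have hlt : (i + t) % n < n := Nat.mod_lt _ hn0
      have h2 := step htype3 hlt hn2 (by rw [h1]; omega)
      rw [h1, Nat.mod_add_mod] at h2
      exact h2
  -- translate membership
  have hb : (OMCS A n i + n - 1) % n = (((i + n - J0) % n + n - 1) % n) := by
    rw [OMCS_eq]
  rw [hb] at hmem
  set b := ((i + n - J0) % n + n - 1) % n with hbdef
  have hblt : b < n := Nat.mod_lt _ hn0
  have hD : (b + n - i) % n = n - 1 - J0 := D_eq hn2 hi hJ0lt
  have hmem' : h < n ∧ (h + n - i) % n ≤ n - 1 - J0 := by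
    rcases hmem with ⟨h1, h2, h3⟩ | ⟨h1, ⟨h2, h3⟩ | h2⟩
    · have hhn : h < n := lt_of_le_of_lt h3 hblt
      rw [hm1 h1 hblt] at hD
      rw [hm1 h2 hhn]
      constructor
      · exact hhn
      · omega
    · rw [hm2 h1 (by omega)] at hD
      rw [hm1 h2 h3]
      constructor
      · exact h3
      · omega
    · have hhn : h < n := by omega
      rw [hm2 h1 (by omega)] at hD
      rw [hm2 (by omega : h < i) (by omega)]
      constructor
      · exact hhn
      · omega
  obtain ⟨hhn, hT⟩ := hmem'
  set t := (h + n - i) % n with htdef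
  have hrec : (i + t) % n = h := by
    rw [htdef, Nat.add_mod_mod]
    have e : i + (h + n - i) = h + n := by omega
    rw [e, Nat.add_mod_right, Nat.mod_eq_of_lt hhn]
  have hJh : Jm A n h = J0 + t := by
    rw [← hrec]
    exact key t (by omega)
  rw [OMCS_eq, OMCS_eq, hJh, ← hJ0, ← hrec]
  have e1 : (i + t) % n + n - (J0 + t) = (i + t) % n + (n - (J0 + t)) := by
    have : (i + t) % n < n := Nat.mod_lt _ hn0
    omega
  rw [e1, Nat.mod_add_mod]
  congr 1
  omega
end
end

section
/- Let A be a sequence of n real numbers in which every element is nonnegative, or every element is nonpositive ('type 1'). Then for any real x and any p ∈ {0,...,n}, mcs(ins(A,p,x)) = max(0, sum(A)) + max(0, x). -/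
noncomputable section

/-!
Every circular subsequence of `ins A p x` is the sum over a set of positions of `ins A p x`.
Dropping position `p` (worth at most `max 0 x`) leaves a sum over a subset of `A`, which,
`A` having constant sign, is at most `max 0 (sum A)`. Conversely, according to the signs of
`sum A` and `x`, the bound is attained by the empty subsequence, the single element `x`, the
whole sequence, or the whole sequence except `x` (a wrapping arc when `0 < p < n`).
-/

open Finset

lemma sum_le_max_zero_sum_of_subset {ι : Type*} {f : ι → ℝ} {s t : Finset ι}
    (hf : (∀ i ∈ t, 0 ≤ f i) ∨ (∀ i ∈ t, f i ≤ 0)) (hst : s ⊆ t) :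
    ∑ i ∈ s, f i ≤ max 0 (∑ i ∈ t, f i) := by
  rcases hf with hf | hf
  · exact (sum_le_sum_of_subset_of_nonneg hst fun i hi _ => hf i hi).trans (le_max_right _ _)
  · exact (sum_nonpos fun i hi => hf i (hst hi)).trans (le_max_left _ _)

lemma sum_le_sum_erase_add_max_zero {ι : Type*} [DecidableEq ι] (f : ι → ℝ) (s : Finset ι)
    (a : ι) : ∑ i ∈ s, f i ≤ ∑ i ∈ s.erase a, f i + max 0 (f a) := by
  by_cases ha : a ∈ s
  · rw [← sum_erase_add s f ha]
    exact add_le_add_right (le_max_right _ _) _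
  · rw [erase_eq_of_notMem ha]
    exact le_add_of_nonneg_right (le_max_left _ _)

def predAbove (p t : ℕ) : ℕ := if t < p then t else t - 1

lemma ins_self (A : ℕ → ℝ) (p : ℕ) (x : ℝ) : ins A p x p = x := by
  simp [ins]

lemma ins_of_ne (A : ℕ → ℝ) {p t : ℕ} (x : ℝ) (ht : t ≠ p) :
    ins A p x t = A (predAbove p t) := by
  unfold ins predAbove
  split_ifs <;> rfl

lemma sum_erase_ins (A : ℕ → ℝ) (p : ℕ) (x : ℝ) (s : Finset ℕ) :
    ∑ t ∈ s.erase p, ins A p x t = ∑ u ∈ (s.erase p).image (predAbove p), A u := by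
  have hinj : Set.InjOn (predAbove p) (s.erase p) := by
    intro t ht t' ht' h
    have := ne_of_mem_erase ht
    have := ne_of_mem_erase ht'
    unfold predAbove at h
    split_ifs at h <;> omega
  rw [sum_image hinj]
  exact sum_congr rfl fun t ht => ins_of_ne A x (ne_of_mem_erase ht)

lemma image_predAbove_erase_range {n p : ℕ} (hp : p ≤ n) :
    ((range (n + 1)).erase p).image (predAbove p) = range n := by
  ext u
  simp only [mem_image, mem_erase, mem_range, predAbove]
  constructor
  · rintro ⟨t, ⟨htp, htn⟩, rfl⟩
    split_ifs <;> omega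
  · intro hu
    refine ⟨if u < p then u else u + 1, ?_, ?_⟩ <;> split_ifs <;> omega

lemma sum_range_erase_ins (A : ℕ → ℝ) {n p : ℕ} (x : ℝ) (hp : p ≤ n) :
    ∑ t ∈ (range (n + 1)).erase p, ins A p x t = ∑ i ∈ range n, A i := by
  rw [sum_erase_ins, image_predAbove_erase_range hp]

lemma sum_range_ins (A : ℕ → ℝ) {n p : ℕ} (x : ℝ) (hp : p ≤ n) :
    ∑ t ∈ range (n + 1), ins A p x t = ∑ i ∈ range n, A i + x := by
  rw [← sum_erase_add _ _ (mem_range.mpr (Nat.lt_succ_of_le hp)), sum_range_erase_ins A x hp,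
    ins_self]

lemma sum_ins_le {A : ℕ → ℝ} {n : ℕ} (hA : (∀ i, i < n → 0 ≤ A i) ∨ (∀ i, i < n → A i ≤ 0))
    (x : ℝ) {p : ℕ} (hp : p ≤ n) {s : Finset ℕ} (hs : s ⊆ range (n + 1)) :
    ∑ t ∈ s, ins A p x t ≤ max 0 (∑ i ∈ range n, A i) + max 0 x := by
  have hsub : (s.erase p).image (predAbove p) ⊆ range n :=
    image_predAbove_erase_range hp ▸ image_subset_image (erase_subset_erase p hs)
  have hA' : (∀ i ∈ range n, 0 ≤ A i) ∨ (∀ i ∈ range n, A i ≤ 0) := by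
    simpa only [mem_range] using hA
  calc ∑ t ∈ s, ins A p x t ≤ ∑ t ∈ s.erase p, ins A p x t + max 0 (ins A p x p) :=
        sum_le_sum_erase_add_max_zero _ s p
    _ ≤ max 0 (∑ i ∈ range n, A i) + max 0 x := by
        rw [sum_erase_ins, ins_self]
        exact add_le_add (sum_le_max_zero_sum_of_subset hA' hsub) le_rfl

def circArc (m j i : ℕ) : Finset ℕ :=
  if j ≤ i then Icc j i else Icc j (m - 1) ∪ Icc 0 i

lemma circseg_eq_sum_circArc (B : ℕ → ℝ) (m j i : ℕ) :
    circseg B m j i = ∑ t ∈ circArc m j i, B t := by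
  unfold circseg circArc seg
  split_ifs with hji
  · rfl
  · refine (sum_union ?_).symm
    exact disjoint_left.mpr fun t ht ht' => by
      simp only [mem_Icc] at ht ht'
      omega

lemma circArc_subset_range {m i : ℕ} (j : ℕ) (hi : i < m) : circArc m j i ⊆ range m := by
  intro t ht
  unfold circArc at ht
  split_ifs at ht
  · simp only [mem_Icc, mem_range] at ht ⊢
    omega
  · simp only [mem_union, mem_Icc, mem_range] at ht ⊢
    omega

lemma circArc_zero_self (m : ℕ) : circArc (m + 1) 0 m = range (m + 1) := by
  ext t
  simp [circArc]

lemma circArc_self (m k : ℕ) : circArc m k k = {k} := by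
  simp [circArc]

lemma exists_circArc_eq_erase {m k : ℕ} (hm : 2 ≤ m) (hk : k < m) :
    ∃ j < m, ∃ i < m, circArc m j i = (range m).erase k := by
  have key : ∀ j i, j < m → i < m → (∀ t, t ∈ circArc m j i ↔ t < m ∧ t ≠ k) →
      ∃ j < m, ∃ i < m, circArc m j i = (range m).erase k := fun j i hj hi h =>
    ⟨j, hj, i, hi, ext fun t => by rw [h, mem_erase, mem_range, and_comm]⟩
  rcases Nat.eq_zero_or_pos k with rfl | hk0
  · exact key 1 (m - 1) (by omega) (by omega) fun t => by
      simp only [circArc, if_pos (show 1 ≤ m - 1 by omega), mem_Icc]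
      omega
  by_cases hkm : k = m - 1
  · exact key 0 (m - 2) (by omega) (by omega) fun t => by
      simp only [circArc, if_pos (Nat.zero_le _), mem_Icc]
      omega
  · exact key (k + 1) (k - 1) (by omega) (by omega) fun t => by
      simp only [circArc, if_neg (show ¬ k + 1 ≤ k - 1 by omega), mem_union, mem_Icc]
      omega

lemma zero_le_mcs (B : ℕ → ℝ) (m : ℕ) : 0 ≤ mcs B m :=
  (le_fold_max 0).mpr (Or.inl le_rfl)

lemma circseg_le_mcs (B : ℕ → ℝ) {m j i : ℕ} (hj : j < m) (hi : i < m) :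
    circseg B m j i ≤ mcs B m :=
  (le_fold_max _).mpr (Or.inr ⟨(j, i), mem_product.mpr ⟨mem_range.mpr hj, mem_range.mpr hi⟩,
    le_rfl⟩)

lemma mcs_le {B : ℕ → ℝ} {m : ℕ} {c : ℝ} (hc : 0 ≤ c)
    (h : ∀ j < m, ∀ i < m, circseg B m j i ≤ c) : mcs B m ≤ c := by
  refine (fold_max_le c).mpr ⟨hc, fun q hq => ?_⟩
  rw [mem_product, mem_range, mem_range] at hq
  exact h _ hq.1 _ hq.2

lemma sum_circArc_le_mcs (B : ℕ → ℝ) {m j i : ℕ} (hj : j < m) (hi : i < m) :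
    ∑ t ∈ circArc m j i, B t ≤ mcs B m :=
  circseg_eq_sum_circArc B m j i ▸ circseg_le_mcs B hj hi

lemma mcs_ins_le {A : ℕ → ℝ} {n : ℕ} (hA : (∀ i, i < n → 0 ≤ A i) ∨ (∀ i, i < n → A i ≤ 0))
    (x : ℝ) {p : ℕ} (hp : p ≤ n) :
    mcs (ins A p x) (n + 1) ≤ max 0 (∑ i ∈ range n, A i) + max 0 x :=
  mcs_le (by positivity) fun j _ i hi => by
    rw [circseg_eq_sum_circArc]
    exact sum_ins_le hA x hp (circArc_subset_range j hi)

lemma le_mcs_ins {A : ℕ → ℝ} {n : ℕ} (hA : (∀ i, i < n → 0 ≤ A i) ∨ (∀ i, i < n → A i ≤ 0))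
    (x : ℝ) {p : ℕ} (hp : p ≤ n) :
    max 0 (∑ i ∈ range n, A i) + max 0 x ≤ mcs (ins A p x) (n + 1) := by
  rcases hA with hA | hA
  · rw [max_eq_right (sum_nonneg fun i hi => hA i (mem_range.mp hi))]
    rcases le_or_gt 0 x with hx | hx
    · rw [max_eq_right hx, ← sum_range_ins A x hp, ← circArc_zero_self]
      exact sum_circArc_le_mcs _ (Nat.succ_pos n) (Nat.lt_succ_self n)
    rw [max_eq_left hx.le, add_zero]
    rcases Nat.eq_zero_or_pos n with rfl | hn
    · simpa using zero_le_mcs (ins A p x) 1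
    obtain ⟨j, hj, i, hi, harc⟩ := exists_circArc_eq_erase (m := n + 1) (k := p) (by omega)
      (by omega)
    rw [← sum_range_erase_ins A x hp, ← harc]
    exact sum_circArc_le_mcs _ hj hi
  · rw [max_eq_left (sum_nonpos fun i hi => hA i (mem_range.mp hi)), zero_add]
    rcases le_or_gt 0 x with hx | hx
    · rw [max_eq_right hx]
      simpa [circArc_self, ins_self] using
        sum_circArc_le_mcs (ins A p x) (Nat.lt_succ_of_le hp) (Nat.lt_succ_of_le hp)
    · rw [max_eq_left hx.le]
      exact zero_le_mcs _ _

theorem stmt17 (A : ℕ → ℝ) (n : ℕ)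
    (h1 : (∀ i, i < n → 0 ≤ A i) ∨ (∀ i, i < n → A i ≤ 0))
    (x : ℝ) (p : ℕ) (hp : p ≤ n) :
    mcs (ins A p x) (n+1) = max 0 (∑ i ∈ Finset.range n, A i) + max 0 x :=
  le_antisymm (mcs_ins_le h1 x hp) (le_mcs_ins h1 x hp)
end
end

section
/- Let A be a sequence of n reals with MCS(A,n-1) < 0 (so in particular the sum of every suffix of A is negative), let x < 0, p ∈ {0,...,n}, and B = ins(A,p,x). Then MCS(B,i) = MS(B,i) for every i ∈ {0,...,n}, and consequently mcs(B) = maxsum(B). -/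
noncomputable section

private lemma suffA (A : ℕ → ℝ) (n : ℕ) (hn : 0 < n) (hlast : MCS A n (n-1) < 0) :
    ∀ j, j < n → seg A j (n-1) < 0 := by
  intro j hj
  have h1 : circseg A n j (n-1) ≤ MCS A n (n-1) := by
    rw [MCS, dif_pos hn]
    exact Finset.le_sup' (fun k => circseg A n k (n-1)) (Finset.mem_range.mpr hj)
  have h2 : circseg A n j (n-1) = seg A j (n-1) := by
    rw [circseg, if_pos (Nat.le_sub_one_of_lt hj)]
  linarith

private lemma segB_le (A : ℕ → ℝ) (n : ℕ) (hn : 0 < n) (hlast : MCS A n (n-1) < 0)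
    (x : ℝ) (hx : x < 0) (p : ℕ) (hp : p ≤ n) :
    ∀ j, j ≤ n → seg (ins A p x) j n ≤ 0 := by
  intro j hj
  set B := ins A p x with hB
  have hIcc : ∀ (C : ℕ → ℝ) (a b : ℕ), seg C a b = ∑ t ∈ Finset.Ico a (b+1), C t := by
    intro C a b
    rw [seg, Finset.sum_Ico_eq_sum_range, ← Finset.Ico_add_one_right_eq_Icc, Finset.sum_Ico_eq_sum_range]
  by_cases hjp : j ≤ p
  · -- seg B j n = x + seg A j (n-1)
    have key : seg B j n = x + seg A j (n-1) := by
      rw [hIcc, ← Finset.sum_Ico_consecutive _ hjp (by omega : p ≤ n+1),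
        Finset.sum_eq_sum_Ico_succ_bot (by omega : p < n+1)]
      have h4 : ∑ t ∈ Finset.Ico j p, A t + ∑ t ∈ Finset.Ico p n, A t
          = ∑ t ∈ Finset.Ico j n, A t :=
        Finset.sum_Ico_consecutive _ hjp (by omega)
      have h5 : seg A j (n-1) = ∑ t ∈ Finset.Ico j n, A t := by
        have hn1 : n - 1 + 1 = n := by omega
        rw [hIcc, hn1]
      have h0 : B p = x := by simp [hB, ins]
      have h1 : ∑ t ∈ Finset.Ico j p, B t = ∑ t ∈ Finset.Ico j p, A t := by
        apply Finset.sum_congr rfl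
        intro t ht
        have := (Finset.mem_Ico.mp ht).2
        simp [hB, ins, this]
      have h2 : ∑ t ∈ Finset.Ico (p+1) (n+1), B t = ∑ t ∈ Finset.Ico p n, A t := by
        have := Finset.sum_Ico_add (fun t => B t) p n 1
        simp only [Nat.add_comm 1] at this
        rw [← this]
        apply Finset.sum_congr rfl
        intro t ht
        have ht' := (Finset.mem_Ico.mp ht).1
        have : ¬ (t + 1 < p) := by omega
        have h3 : t + 1 ≠ p := by omega
        simp [hB, ins, this, h3]
      rw [h0, h1, h2]
      linarith
    have hseg : seg A j (n-1) ≤ 0 := by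
      rcases Nat.lt_or_ge j n with h | h
      · exact le_of_lt (suffA A n hn hlast j h)
      · have : Finset.Icc j (n-1) = ∅ := by
          rw [Finset.Icc_eq_empty_iff]; omega
        rw [seg, this]; simp
    linarith
  · -- p < j : seg B j n = seg A (j-1) (n-1) < 0
    push_neg at hjp
    have key : seg B j n = seg A (j-1) (n-1) := by
      rw [hIcc, hIcc]
      have hshift := Finset.sum_Ico_add B (j-1) n 1
      simp only [Nat.add_comm 1] at hshift
      have hj1 : j - 1 + 1 = j := by omega
      rw [hj1] at hshift
      have hn1 : n - 1 + 1 = n := by omega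
      rw [hn1, ← hshift]
      apply Finset.sum_congr rfl
      intro t ht
      have ht' := (Finset.mem_Ico.mp ht).1
      have h1 : ¬ (t + 1 < p) := by omega
      have h2 : t + 1 ≠ p := by omega
      simp [hB, ins, h1, h2]
      
    rw [key]
    exact le_of_lt (suffA A n hn hlast (j-1) (by omega))

theorem stmt18 (A : ℕ → ℝ) (n : ℕ) (hn : 0 < n) (hlast : MCS A n (n-1) < 0)
    (x : ℝ) (hx : x < 0) (p : ℕ) (hp : p ≤ n) :
    (∀ i, i ≤ n → MCS (ins A p x) (n+1) i = MS (ins A p x) i) ∧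
    mcs (ins A p x) (n+1) = maxsum (ins A p x) (n+1) := by
  set B := ins A p x with hB
  have hsuff : ∀ j, j ≤ n → seg B j n ≤ 0 := segB_le A n hn hlast x hx p hp
  have hMS : ∀ i j, j ≤ i → seg B j i ≤ MS B i := by
    intro i j hji
    exact Finset.le_sup' (fun k => seg B k i) (Finset.mem_range.mpr (by omega : j < i + 1))
  have hmain : ∀ i, i ≤ n → MCS B (n+1) i = MS B i := by
    intro i hi
    rw [MCS, dif_pos (Nat.succ_pos n)]
    apply le_antisymm
    · apply Finset.sup'_le
      intro j hjmem
      have hj : j < n + 1 := Finset.mem_range.mp hjmem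
      by_cases hji : j ≤ i
      · rw [circseg, if_pos hji]
        exact hMS i j hji
      · rw [circseg, if_neg hji, Nat.add_sub_cancel]
        have h1 : seg B j n ≤ 0 := hsuff j (by omega)
        have h2 : seg B 0 i ≤ MS B i := hMS i 0 (Nat.zero_le i)
        linarith
    · rw [MS]
      apply Finset.sup'_le
      intro j hjmem
      have hj : j < i + 1 := Finset.mem_range.mp hjmem
      have : seg B j i = circseg B (n+1) j i := by
        rw [circseg, if_pos (by omega)]
      rw [this]
      exact Finset.le_sup' (fun k => circseg B (n+1) k i)
        (Finset.mem_range.mpr (by omega : j < n + 1))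
  refine ⟨hmain, ?_⟩
  apply le_antisymm
  · rw [mcs, Finset.fold_max_le]
    constructor
    · rw [maxsum, Finset.le_fold_max]
      exact Or.inl le_rfl
    · rintro ⟨j, i⟩ hmem
      rw [Finset.mem_product, Finset.mem_range, Finset.mem_range] at hmem
      obtain ⟨hjn, hin⟩ := hmem
      by_cases hji : j ≤ i
      · rw [maxsum, Finset.le_fold_max]
        refine Or.inr ⟨(j, i), ?_, ?_⟩
        · simp [Finset.mem_filter, Finset.mem_product, Finset.mem_range, hjn, hin, hji]
        · rw [circseg, if_pos hji]
      · have h1 : circseg B (n+1) j i = seg B j n + seg B 0 i := by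
          have e : n + 1 - 1 = n := by omega
          rw [circseg, if_neg hji, e]
        have h2 : seg B j n ≤ 0 := hsuff j (by omega)
        have h3 : seg B 0 i ≤ maxsum B (n+1) := by
          rw [maxsum, Finset.le_fold_max]
          refine Or.inr ⟨(0, i), ?_, le_rfl⟩
          simp [Finset.mem_filter, Finset.mem_product, Finset.mem_range, hin, Nat.succ_pos n]
        linarith
  · rw [maxsum, Finset.fold_max_le]
    constructor
    · rw [mcs, Finset.le_fold_max]
      exact Or.inl le_rfl
    · rintro ⟨j, i⟩ hmem
      rw [Finset.mem_filter, Finset.mem_product, Finset.mem_range, Finset.mem_range] at hmem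
      obtain ⟨⟨hjn, hin⟩, hji⟩ := hmem
      rw [mcs, Finset.le_fold_max]
      refine Or.inr ⟨(j, i), ?_, ?_⟩
      · simp [Finset.mem_product, Finset.mem_range, hjn, hin]
      · rw [circseg, if_pos hji]
end
end

section
/- Let A be a sequence of n reals with interval partition I_0,...,I_{λ-1} and λ > 1, and for each i < λ-1 define IRS(i) = max over β_i < j < n of sum(A[β_i+1 .. j]) and IMPFS(i) = max over j ∈ [α_i, β_i] of sum(A[α_i .. j]). Then IRS(λ-2) = IMPFS(λ-1), and for every i < λ-2, IRS(i) = max(IMPFS(i+1), sum(I_{i+1}) + IRS(i+1)). -/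
noncomputable section

/-
`IRS i` is the maximal prefix sum of `A[α (i+1)..n-1]`. A prefix of `A[a..c]` with `a ≤ b < c`
either ends inside `A[a..b]` or is all of `A[a..b]` followed by a prefix of `A[b+1..c]`; splitting
at `b = β (i+1)` gives the recursion, and for `i = L-2` the range `A[α (L-1)..n-1]` is exactly the
last interval.
-/

lemma seg_add_seg (A : ℕ → ℝ) {a b c : ℕ} (hab : a ≤ b) (hbc : b < c) :
    seg A a b + seg A (b + 1) c = seg A a c := by
  unfold seg
  rw [← Finset.sum_union (Finset.disjoint_left.2 fun t ht ht' => by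
    simp only [Finset.mem_Icc] at ht ht'; omega)]
  congr 1
  ext t
  simp only [Finset.mem_union, Finset.mem_Icc]
  omega

def maxPrefixSum (A : ℕ → ℝ) (a b : ℕ) : ℝ := sSup (seg A a '' Set.Icc a b)

lemma maxPrefixSum_eq_sup' (A : ℕ → ℝ) {a b : ℕ} (h : a ≤ b) :
    maxPrefixSum A a b = (Finset.Icc a b).sup' (Finset.nonempty_Icc.2 h) (seg A a) := by
  rw [Finset.sup'_eq_csSup_image, Finset.coe_Icc, maxPrefixSum]

lemma maxPrefixSum_split (A : ℕ → ℝ) {a b c : ℕ} (hab : a ≤ b) (hbc : b < c) :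
    maxPrefixSum A a c = max (maxPrefixSum A a b) (seg A a b + maxPrefixSum A (b + 1) c) := by
  have hunion : Finset.Icc a c = Finset.Icc a b ∪ Finset.Icc (b + 1) c := by
    ext t
    simp only [Finset.mem_union, Finset.mem_Icc]
    omega
  rw [maxPrefixSum_eq_sup' A (hab.trans hbc.le), maxPrefixSum_eq_sup' A hab,
    maxPrefixSum_eq_sup' A hbc, Finset.sup'_congr _ hunion fun _ _ => rfl,
    Finset.sup'_union (Finset.nonempty_Icc.2 hab) (Finset.nonempty_Icc.2 hbc), Finset.add_sup']
  congr 1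
  refine Finset.sup'_congr _ rfl fun j hj => ?_
  rw [seg_add_seg A hab (Finset.mem_Icc.1 hj).1]

namespace IntervalPartition

variable {A : ℕ → ℝ} {n L : ℕ} {α β : ℕ → ℕ}

lemma α_succ (h : IntervalPartition A n L α β) {i : ℕ} (hi : i + 1 < L) :
    α (i + 1) = β i + 1 :=
  h.2.2.2.2.1 i hi

lemma α_le_β (h : IntervalPartition A n L α β) {i : ℕ} (hi : i < L) : α i ≤ β i :=
  h.2.2.2.2.2.1 i hi

lemma β_last (h : IntervalPartition A n L α β) : β (L - 1) = n - 1 :=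
  h.2.2.2.1

lemma β_lt_β_succ (h : IntervalPartition A n L α β) {i : ℕ} (hi : i + 1 < L) :
    β i < β (i + 1) := by
  have hle := h.α_le_β hi
  rw [h.α_succ hi] at hle
  omega

lemma β_le (h : IntervalPartition A n L α β) {i : ℕ} (hi : i < L) : β i ≤ n - 1 := by
  have hmono : StrictMonoOn β (Set.Iic (L - 1)) :=
    strictMonoOn_Iic_of_lt_succ fun m hm => h.β_lt_β_succ (by omega)
  rw [← h.β_last]
  exact hmono.monotoneOn (Set.mem_Iic.2 (by omega)) Set.self_mem_Iic (by omega)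

end IntervalPartition

theorem stmt19 (A : ℕ → ℝ) (n L : ℕ) (α β : ℕ → ℕ)
    (hip : IntervalPartition A n L α β) (hL : 1 < L)
    (IRS IMPFS : ℕ → ℝ)
    (hIRS : ∀ i, i < L - 1 →
      IRS i = sSup {v | ∃ j, β i < j ∧ j < n ∧ v = seg A (β i + 1) j})
    (hIMPFS : ∀ i, i < L →
      IMPFS i = sSup {v | ∃ j, α i ≤ j ∧ j ≤ β i ∧ v = seg A (α i) j}) :
    IRS (L-2) = IMPFS (L-1) ∧
    ∀ i, i + 2 < L →
      IRS i = max (IMPFS (i+1)) (seg A (α (i+1)) (β (i+1)) + IRS (i+1)) := by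
  have hIMPFS' : ∀ i, i < L → IMPFS i = maxPrefixSum A (α i) (β i) := by
    intro i hi
    rw [hIMPFS i hi, maxPrefixSum]
    congr 1
    ext v
    simp only [Set.mem_ofPred_eq, Set.mem_image, Set.mem_Icc]
    grind
  have hIRS' : ∀ i, i + 1 < L → IRS i = maxPrefixSum A (α (i + 1)) (n - 1) := by
    intro i hi
    rw [hIRS i (by omega), maxPrefixSum, hip.α_succ hi]
    congr 1
    ext v
    simp only [Set.mem_ofPred_eq, Set.mem_image, Set.mem_Icc]
    grind
  refine ⟨?_, fun i hi => ?_⟩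
  · obtain ⟨k, rfl⟩ : ∃ k, L = k + 2 := ⟨L - 2, by omega⟩
    show IRS k = IMPFS (k + 1)
    rw [hIRS' k (by omega), hIMPFS' (k + 1) (by omega), ← hip.β_last]
    rfl
  · rw [hIRS' i (by omega), hIRS' (i + 1) hi, hIMPFS' (i + 1) (by omega), hip.α_succ hi]
    exact maxPrefixSum_split A (hip.α_le_β (by omega))
      ((hip.β_lt_β_succ hi).trans_le (hip.β_le hi))
end
end
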